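/- Let φ : R₁ → R be a flat ring homomorphism and M₁ a finitely presented R₁-module. Then the extension of tr_{R₁}(M₁) to R equals tr_R(M₁ ⊗_{R₁} R). -/

import Mathlib

open TensorProduct

/-- The trace ideal of an `R`-module `M`: the sum of the images of all
`R`-linear maps `M → R`. -/
def traceIdeal (R : Type*) [CommRing R] (M : Type*) [AddCommGroup M] [Module R M] : Ideal R :=
  ⨆ φ : M →ₗ[R] R, LinearMap.range φ

/-!
Because `M₁` is finitely presented and `R` is flat over `R₁`, taking duals commutes with
base change: `R ⊗[R₁] Hom(M₁, R₁) ≃ Hom_R(R ⊗[R₁] M₁, R)`. So every linear form on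
`R ⊗[R₁] M₁` is an `R`-combination of base changes of linear forms on `M₁`, and the values
of those lie in `tr(M₁)·R`.
-/
section

variable {R : Type*} [CommRing R] {M : Type*} [AddCommGroup M] [Module R M]

theorem apply_mem_traceIdeal (f : M →ₗ[R] R) (m : M) : f m ∈ traceIdeal R M :=
  le_iSup (fun f : M →ₗ[R] R ↦ LinearMap.range f) f ⟨m, rfl⟩

theorem traceIdeal_le_iff {I : Ideal R} :
    traceIdeal R M ≤ I ↔ ∀ (f : M →ₗ[R] R) (m : M), f m ∈ I := by
  refine iSup_le_iff.trans (forall_congr' fun f ↦ ⟨fun h m ↦ h ⟨m, rfl⟩, ?_⟩)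
  rintro h _ ⟨m, rfl⟩
  exact h m

end

section

variable {R₁ R : Type*} [CommRing R₁] [CommRing R] [Algebra R₁ R]
  {M₁ : Type*} [AddCommGroup M₁] [Module R₁ M₁]

theorem Module.Dual.isBaseChange_baseChange [Module.Flat R₁ R]
    [Module.FinitePresentation R₁ M₁] :
    IsBaseChange R (Module.Dual.baseChange (R := R₁) (V := M₁) R) := by
  convert (Module.FinitePresentation.isBaseChange_map R₁ M₁ R₁ R).comp
    (IsBaseChange.ofEquiv (LinearEquiv.congrRight (AlgebraTensorModule.rid R₁ R R))) using 1
  rfl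

theorem Module.Dual.baseChange_apply_mem_map_traceIdeal (f : Module.Dual R₁ M₁)
    (x : R ⊗[R₁] M₁) :
    f.baseChange R x ∈ (traceIdeal R₁ M₁).map (algebraMap R₁ R) := by
  induction x using TensorProduct.induction_on with
  | zero => simp
  | tmul r m =>
    rw [baseChange_apply_tmul, Algebra.smul_def]
    exact Ideal.mul_mem_right _ _ (Ideal.mem_map_of_mem _ (apply_mem_traceIdeal f m))
  | add x y hx hy => rw [map_add]; exact add_mem hx hy

theorem map_traceIdeal_le_traceIdeal_baseChange :
    (traceIdeal R₁ M₁).map (algebraMap R₁ R) ≤ traceIdeal R (R ⊗[R₁] M₁) := by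
  refine Ideal.map_le_iff_le_comap.2 (traceIdeal_le_iff.2 fun f m ↦ ?_)
  simpa [Algebra.algebraMap_eq_smul_one] using
    apply_mem_traceIdeal (Module.Dual.baseChange R f) (1 ⊗ₜ m)

theorem traceIdeal_baseChange_le_map_traceIdeal [Module.Flat R₁ R]
    [Module.FinitePresentation R₁ M₁] :
    traceIdeal R (R ⊗[R₁] M₁) ≤ (traceIdeal R₁ M₁).map (algebraMap R₁ R) := by
  refine traceIdeal_le_iff.2 fun g ↦ ?_
  refine Module.Dual.isBaseChange_baseChange.inductionOn g _ (by simp)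
    (fun f ↦ f.baseChange_apply_mem_map_traceIdeal)
    (fun r g hg x ↦ Ideal.mul_mem_left _ r (hg x)) (fun g g' hg hg' x ↦ add_mem (hg x) (hg' x))

end

/-- If `R₁ → R` is a flat ring homomorphism and `M₁` a finitely presented `R₁`-module,
then `tr_{R₁}(M₁)·R = tr_R(M₁ ⊗_{R₁} R)`. -/
theorem trace_map_eq_of_flat {R₁ R : Type*} [CommRing R₁] [CommRing R] [Algebra R₁ R]
    (hflat : Module.Flat R₁ R)
    (M₁ : Type*) [AddCommGroup M₁] [Module R₁ M₁]
    (hfp : Module.FinitePresentation R₁ M₁) :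
    Ideal.map (algebraMap R₁ R) (traceIdeal R₁ M₁) = traceIdeal R (R ⊗[R₁] M₁) :=
  map_traceIdeal_le_traceIdeal_baseChange.antisymm traceIdeal_baseChange_le_map_traceIdeal
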